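/- arXiv:2311.14417 — 3 statements merged into one kernel-verified Lean document; each statement's English description precedes it below -/
import Mathlib

section
/- Let LP-extreme alternatives of an individual be ordered by increasing weight, with strictly decreasing incremental efficiencies Δe_j = (s_j − s_{j−1})/(w_j − w_{j−1}). Under a proportional tax-subsidy policy with level τ > 0 and arbitrary baseline A, define post-policy utilities V_j = u_j + τ(s_j − A). Then V_{j−1} ≤ V_j if and only if Δe_j ≥ 1/τ, and V_{j−1} > V_j if and only if Δe_j < 1/τ. Consequently, the utility-maximizing LP-extreme is the largest index j* such that Δe_{j*} ≥ 1/τ (or the first alternative if no such index exists). -/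
/-!
Since weights increase, `u j - u (j+1) > 0`, so for `V j = u j + τ (s j - A)` the inequality
`V j ≤ V (j+1)` is equivalent to `u j - u (j+1) ≤ τ (s (j+1) - s j)`, i.e. to `Δe ≥ 1/τ`;
the baseline `A` cancels.
Hence under the hypotheses on `jstar` the sequence `V` is nondecreasing up to `jstar` and
decreasing after it, so it peaks at `jstar`.
-/

def taxedUtility (τ A : ℝ) (u s : ℕ → ℝ) (j : ℕ) : ℝ := u j + τ * (s j - A)

/-- The paper's `Δe_{j+1}`, using `w (j+1) - w j = u j - u (j+1)`. -/
noncomputable def incrementalEfficiency (u s : ℕ → ℝ) (j : ℕ) : ℝ :=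
  (s (j+1) - s j) / (u j - u (j+1))

theorem taxedUtility_le_succ_iff {τ A : ℝ} {u s : ℕ → ℝ} {j : ℕ} (hτ : 0 < τ)
    (hu : u (j+1) < u j) :
    taxedUtility τ A u s j ≤ taxedUtility τ A u s (j+1) ↔
      1/τ ≤ incrementalEfficiency u s j := by
  rw [incrementalEfficiency, div_le_div_iff₀ hτ (sub_pos.mpr hu), taxedUtility, taxedUtility]
  constructor <;> intro h <;> linarith

theorem taxedUtility_succ_lt_iff {τ A : ℝ} {u s : ℕ → ℝ} {j : ℕ} (hτ : 0 < τ)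
    (hu : u (j+1) < u j) :
    taxedUtility τ A u s (j+1) < taxedUtility τ A u s j ↔
      incrementalEfficiency u s j < 1/τ := by
  rw [← not_le, taxedUtility_le_succ_iff hτ hu, not_le]

theorem le_of_le_succ_of_le {α : Type*} [Preorder α] {f : ℕ → α} {k : ℕ}
    (hup : ∀ j, j + 1 ≤ k → f j ≤ f (j+1)) {j : ℕ} (hj : j ≤ k) : f j ≤ f k := by
  induction hj using Nat.decreasingInduction with
  | self => exact le_rfl
  | of_succ i hi ih => exact (hup i hi).trans ih

theorem le_of_succ_le_of_le {α : Type*} [Preorder α] {f : ℕ → α} {k m : ℕ}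
    (hdown : ∀ j, k ≤ j → j + 1 < m → f (j+1) ≤ f j) {j : ℕ} (hkj : k ≤ j) (hjm : j < m) :
    f j ≤ f k := by
  induction j, hkj using Nat.le_induction with
  | base => exact le_rfl
  | succ i hki ih => exact (hdown i hki hjm).trans (ih (by omega))

theorem le_of_unimodal {α : Type*} [Preorder α] {f : ℕ → α} {k m : ℕ}
    (hup : ∀ j, j + 1 ≤ k → f j ≤ f (j+1))
    (hdown : ∀ j, k ≤ j → j + 1 < m → f (j+1) ≤ f j) {j : ℕ} (hjm : j < m) : f j ≤ f k := by
  rcases le_total j k with hjk | hkj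
  · exact le_of_le_succ_of_le hup hjk
  · exact le_of_succ_le_of_le hdown hkj hjm

theorem stmt7_general (m : ℕ) (τ A : ℝ) (u s : ℕ → ℝ)
    (hτ : 0 < τ)
    (hu : ∀ a b, a < b → b < m → u b < u a) :
    (∀ j, j + 1 < m →
      ((u j + τ * (s j - A) ≤ u (j+1) + τ * (s (j+1) - A)) ↔
        (s (j+1) - s j) / (u j - u (j+1)) ≥ 1/τ)) ∧
    (∀ j, j + 1 < m →
      ((u (j+1) + τ * (s (j+1) - A) < u j + τ * (s j - A)) ↔
        (s (j+1) - s j) / (u j - u (j+1)) < 1/τ)) ∧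
    (∀ jstar, jstar < m →
      (∀ j, j + 1 ≤ jstar → (s (j+1) - s j) / (u j - u (j+1)) ≥ 1/τ) →
      (∀ j, jstar ≤ j → j + 1 < m → (s (j+1) - s j) / (u j - u (j+1)) < 1/τ) →
      ∀ j, j < m → u j + τ * (s j - A) ≤ u jstar + τ * (s jstar - A)) := by
  have hu_succ : ∀ j, j + 1 < m → u (j+1) < u j := fun j hj => hu j (j+1) (lt_add_one j) hj
  have rise : ∀ j, j + 1 < m → (taxedUtility τ A u s j ≤ taxedUtility τ A u s (j+1) ↔
      1/τ ≤ incrementalEfficiency u s j) :=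
    fun j hj => taxedUtility_le_succ_iff hτ (hu_succ j hj)
  have fall : ∀ j, j + 1 < m → (taxedUtility τ A u s (j+1) < taxedUtility τ A u s j ↔
      incrementalEfficiency u s j < 1/τ) :=
    fun j hj => taxedUtility_succ_lt_iff hτ (hu_succ j hj)
  refine ⟨rise, fall, fun jstar hjstar hup hdown j hj => ?_⟩
  refine le_of_unimodal (f := taxedUtility τ A u s) (fun i hi => ?_) (fun i hi him => ?_) hj
  · exact (rise i (by omega)).mpr (hup i hi)
  · exact ((fall i him).mpr (hdown i hi him)).le

/-- under a proportional tax-subsidy policy, V_{j-1} ≤ V_j iff Δe_j ≥ 1/τ,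
and the utility-maximizing LP-extreme is the last one with Δe ≥ 1/τ. -/
theorem stmt7 (m : ℕ) (τ A : ℝ) (u s : ℕ → ℝ)
    (hτ : 0 < τ)
    (hu : ∀ a b, a < b → b < m → u b < u a)
    (hs : ∀ a b, a < b → b < m → s a < s b) :
    (∀ j, j + 1 < m →
      ((u j + τ * (s j - A) ≤ u (j+1) + τ * (s (j+1) - A)) ↔
        (s (j+1) - s j) / (u j - u (j+1)) ≥ 1/τ)) ∧
    (∀ j, j + 1 < m →
      ((u (j+1) + τ * (s (j+1) - A) < u j + τ * (s j - A)) ↔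
        (s (j+1) - s j) / (u j - u (j+1)) < 1/τ)) ∧
    (∀ jstar, jstar < m →
      (∀ j, j + 1 ≤ jstar → (s (j+1) - s j) / (u j - u (j+1)) ≥ 1/τ) →
      (∀ j, jstar ≤ j → j + 1 < m → (s (j+1) - s j) / (u j - u (j+1)) < 1/τ) →
      ∀ j, j < m → u j + τ * (s j - A) ≤ u jstar + τ * (s jstar - A)) :=
  stmt7_general m τ A u s hτ hu
end

section
/- In the concavized setting, the greedy solution is exactly optimal at each of its break points: if c^(k) is the total budget spent by the greedy algorithm after k iterations, then the greedy welfare W^(k) equals the optimal MCKP value with capacity exactly c^(k). -/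
/-!
The greedy profile `g` is a maximiser of the Lagrangian `∑ i, (s i (x i) - e * w i (x i))` for the
split efficiency `e ≥ 0`: in each class the increments up to `g i` have efficiency at least `e` and
those beyond have efficiency at most `e`, so `s i x - s i (g i) ≤ e * (w i x - w i (g i))` for every
item `x`. Summing over the classes, any selection within the budget `∑ i, w i (g i)` gains at most
`e` times a nonpositive amount of cost.
-/

open Finset

theorem sub_le_sub_of_forall_succ_sub_le {f h : ℕ → ℝ} {a b : ℕ} (hab : a ≤ b)
    (hstep : ∀ j, a ≤ j → j < b → f (j + 1) - f j ≤ h (j + 1) - h j) :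
    f b - f a ≤ h b - h a := by
  induction b, hab using Nat.le_induction with
  | base => simp
  | succ b hab ih =>
    have := hstep b hab (Nat.lt_succ_self b)
    linarith [ih fun j haj hjb => hstep j haj (hjb.trans (Nat.lt_succ_self b))]

theorem sub_le_mul_sub_of_efficiency_split {m g x : ℕ} {w s : ℕ → ℝ} {e : ℝ}
    (hg : g < m) (hx : x < m) (hw : ∀ j, j + 1 < m → w j < w (j + 1))
    (hge : ∀ j, 1 ≤ j → j ≤ g → e ≤ (s j - s (j - 1)) / (w j - w (j - 1)))
    (hle : ∀ j, g < j → j < m → (s j - s (j - 1)) / (w j - w (j - 1)) ≤ e) :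
    s x - s g ≤ e * (w x - w g) := by
  rcases le_total x g with hxg | hgx
  · have hdown : e * w g - e * w x ≤ s g - s x := by
      refine sub_le_sub_of_forall_succ_sub_le (f := fun j => e * w j) hxg fun j _ hjg => ?_
      have hpos : 0 < w (j + 1) - w j := sub_pos.mpr (hw j (by omega))
      have := hge (j + 1) (by omega) hjg
      rw [Nat.add_sub_cancel, le_div_iff₀ hpos] at this
      linarith
    linarith
  · have hup : s x - s g ≤ e * w x - e * w g := by
      refine sub_le_sub_of_forall_succ_sub_le (h := fun j => e * w j) hgx fun j _ _ => ?_
      have hpos : 0 < w (j + 1) - w j := sub_pos.mpr (hw j (by omega))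
      have := hle (j + 1) (by omega) (by omega)
      rw [Nat.add_sub_cancel, div_le_iff₀ hpos] at this
      linarith
    linarith

theorem sum_le_sum_of_sub_le_mul_sub {ι : Type*} (t : Finset ι) {c c' v v' : ι → ℝ} {e : ℝ}
    (he : 0 ≤ e) (hcost : ∑ i ∈ t, c i ≤ ∑ i ∈ t, c' i)
    (hgain : ∀ i ∈ t, v i - v' i ≤ e * (c i - c' i)) :
    ∑ i ∈ t, v i ≤ ∑ i ∈ t, v' i := by
  have hsum : ∑ i ∈ t, v i - ∑ i ∈ t, v' i ≤ e * (∑ i ∈ t, c i - ∑ i ∈ t, c' i) := by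
    rw [← sum_sub_distrib, ← sum_sub_distrib, mul_sum]
    exact sum_le_sum hgain
  linarith [mul_nonneg he (sub_nonneg.mpr hcost)]

theorem stmt11_general {ι : Type*} [Fintype ι]
    (m : ι → ℕ) (w s : ι → ℕ → ℝ) (g : ι → ℕ) (eSplit : ℝ)
    (hg : ∀ i, g i < m i)
    (hwmono : ∀ i a b, a < b → b < m i → w i a < w i b)
    (heSplit_nn : 0 ≤ eSplit)
    (hge : ∀ i j, 1 ≤ j → j ≤ g i →
      eSplit ≤ (s i j - s i (j-1)) / (w i j - w i (j-1)))
    (hle : ∀ i j, g i < j → j < m i →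
      (s i j - s i (j-1)) / (w i j - w i (j-1)) ≤ eSplit) :
    IsGreatest {p : ℝ | ∃ x : ι → ℕ, (∀ i, x i < m i) ∧
        (∑ i, w i (x i)) ≤ (∑ i, w i (g i)) ∧ p = ∑ i, s i (x i)}
      (∑ i, s i (g i)) := by
  refine ⟨⟨g, hg, le_rfl, rfl⟩, ?_⟩
  rintro p ⟨x, hxm, hxw, rfl⟩
  refine sum_le_sum_of_sub_le_mul_sub univ heSplit_nn hxw fun i _ => ?_
  exact sub_le_mul_sub_of_efficiency_split (hg i) (hxm i)
    (fun j hj => hwmono i j (j + 1) (Nat.lt_succ_self j) hj) (hge i) (hle i)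

/-- the greedy solution is exactly optimal at each of its break points:
the greedy welfare is the greatest MCKP value with capacity equal to the spent budget. -/
theorem stmt11 {ι : Type*} [Fintype ι]
    (m : ι → ℕ) (w s : ι → ℕ → ℝ) (g : ι → ℕ) (eSplit : ℝ)
    (hm : ∀ i, 1 ≤ m i) (hg : ∀ i, g i < m i)
    (hw0 : ∀ i, w i 0 = 0)
    (hwmono : ∀ i a b, a < b → b < m i → w i a < w i b)
    (hsmono : ∀ i a b, a < b → b < m i → s i a < s i b)
    (heff_dec : ∀ i j, 1 ≤ j → j + 1 < m i →
      (s i (j+1) - s i j) / (w i (j+1) - w i j)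
        < (s i j - s i (j-1)) / (w i j - w i (j-1)))
    (heSplit_nn : 0 ≤ eSplit)
    (hge : ∀ i j, 1 ≤ j → j ≤ g i →
      eSplit ≤ (s i j - s i (j-1)) / (w i j - w i (j-1)))
    (hle : ∀ i j, g i < j → j < m i →
      (s i j - s i (j-1)) / (w i j - w i (j-1)) ≤ eSplit) :
    IsGreatest {p : ℝ | ∃ x : ι → ℕ, (∀ i, x i < m i) ∧
        (∑ i, w i (x i)) ≤ (∑ i, w i (g i)) ∧ p = ∑ i, s i (x i)}
      (∑ i, s i (g i)) :=
  stmt11_general m w s g eSplit hg hwmono heSplit_nn hge hle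
end

section
/- Let ξ be a logistic random variable with scale μ > 0 and let Δv ∈ ℝ. Then the quantity y = Δv + E[ξ | ξ > −Δv] equals μ·((1 + e^{Δv/μ})/e^{Δv/μ})·ln(1 + e^{Δv/μ}), and this quantity is nonnegative for every Δv ∈ ℝ. -/
/-!
With `F x = sigmoid (x / μ)` the logistic distribution function, the function
`tailMoment μ z = z * (1 - F z) - μ * log (F z)` has derivative `-z f(z)` (using `f = F (1 - F) / μ`)
and tends to `0` at `+∞`, so it equals `∫_z^∞ x f(x) dx`. At `z = -Δv` one has `1 - F z = F Δv`
and `-log F(-Δv) = log (1 + e^{Δv/μ})`, so the `Δv` terms cancel and what remains is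
`μ log (1 + e^{Δv/μ}) / F Δv`, with `1 / F Δv = (1 + e^{Δv/μ}) / e^{Δv/μ}`.
-/

open MeasureTheory Real Filter Set Topology

lemma sigmoid_eq_exp_div (t : ℝ) : sigmoid t = exp t / (1 + exp t) := by
  rw [sigmoid_def, exp_neg]
  field_simp
  ring

lemma one_sub_sigmoid_le_exp_neg (t : ℝ) : 1 - sigmoid t ≤ exp (-t) := by
  rw [← sigmoid_neg, ← sigmoid_mul_rexp_neg]
  exact mul_le_of_le_one_left (exp_pos _).le (sigmoid_le_one t)

namespace Logistic

noncomputable def pdf (μ x : ℝ) : ℝ := exp (x / μ) / (μ * (1 + exp (x / μ)) ^ 2)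

noncomputable def tailMoment (μ z : ℝ) : ℝ := z * (1 - sigmoid (z / μ)) - μ * log (sigmoid (z / μ))

lemma pdf_eq_sigmoid (μ x : ℝ) :
    pdf μ x = sigmoid (x / μ) * (1 - sigmoid (x / μ)) / μ := by
  rw [pdf, sigmoid_eq_exp_div]
  field_simp
  ring

lemma pdf_nonneg {μ : ℝ} (hμ : 0 ≤ μ) (x : ℝ) : 0 ≤ pdf μ x := by
  rw [pdf]
  positivity

lemma hasDerivAt_sigmoid_div (μ x : ℝ) :
    HasDerivAt (fun x => sigmoid (x / μ)) (pdf μ x) x := by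
  refine ((hasDerivAt_sigmoid (x / μ)).comp x ((hasDerivAt_id x).div_const μ)).congr_deriv ?_
  rw [pdf_eq_sigmoid]
  ring

lemma tendsto_sigmoid_div_atTop {μ : ℝ} (hμ : 0 < μ) :
    Tendsto (fun x => sigmoid (x / μ)) atTop (𝓝 1) :=
  tendsto_sigmoid_atTop.comp (tendsto_id.atTop_div_const hμ)

lemma hasDerivAt_tailMoment {μ : ℝ} (hμ : μ ≠ 0) (z : ℝ) :
    HasDerivAt (tailMoment μ) (-(z * pdf μ z)) z := by
  have hσ := hasDerivAt_sigmoid_div μ z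
  have hlog := (hσ.log (sigmoid_pos _).ne').const_mul μ
  refine (((hasDerivAt_id z).mul (hσ.const_sub 1)).sub hlog).congr_deriv ?_
  rw [pdf_eq_sigmoid, id]
  field_simp [(sigmoid_pos (z / μ)).ne']
  ring

lemma tendsto_tailMoment_atTop {μ : ℝ} (hμ : 0 < μ) :
    Tendsto (tailMoment μ) atTop (𝓝 0) := by
  have hdiv : Tendsto (fun z => z / μ) atTop atTop := tendsto_id.atTop_div_const hμ
  have hbound : Tendsto (fun z => μ * (z / μ * exp (-(z / μ)))) atTop (𝓝 0) := by
    simpa using ((tendsto_pow_mul_exp_neg_atTop_nhds_zero 1).comp hdiv).const_mul μ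
  have hfirst : Tendsto (fun z => z * (1 - sigmoid (z / μ))) atTop (𝓝 0) := by
    refine squeeze_zero' ?_ ?_ hbound
    · filter_upwards [eventually_ge_atTop 0] with z hz
      exact mul_nonneg hz (sub_nonneg.2 (sigmoid_le_one _))
    · filter_upwards [eventually_ge_atTop 0] with z hz
      calc z * (1 - sigmoid (z / μ)) ≤ z * exp (-(z / μ)) :=
            mul_le_mul_of_nonneg_left (one_sub_sigmoid_le_exp_neg _) hz
        _ = μ * (z / μ * exp (-(z / μ))) := by field_simp
  have hlog : Tendsto (fun z => μ * log (sigmoid (z / μ))) atTop (𝓝 0) := by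
    simpa using (((continuousAt_log one_ne_zero).tendsto).comp
      (tendsto_sigmoid_div_atTop hμ)).const_mul μ
  have := hfirst.sub hlog
  rwa [sub_zero] at this

lemma integrableOn_Ioi_mul_pdf {μ : ℝ} (hμ : 0 < μ) (a : ℝ) :
    IntegrableOn (fun x => x * pdf μ x) (Ioi a) := by
  have hpdf : IntegrableOn (pdf μ) (Ioi a) :=
    integrableOn_Ioi_deriv_of_nonneg' (fun x _ => hasDerivAt_sigmoid_div μ x)
      (fun x _ => pdf_nonneg hμ.le x) (tendsto_sigmoid_div_atTop hμ)
  -- Shifting by `a` makes the integrand nonnegative on `Ioi a`, where an antiderivative with a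
  -- finite limit at `+∞` gives integrability.
  have hshift : IntegrableOn (fun x => (x - a) * pdf μ x) (Ioi a) := by
    refine integrableOn_Ioi_deriv_of_nonneg'
      (g := fun x => -tailMoment μ x - a * sigmoid (x / μ)) (fun x _ => ?_)
      (fun x hx => mul_nonneg (sub_nonneg.2 (le_of_lt hx)) (pdf_nonneg hμ.le x))
      (((tendsto_tailMoment_atTop hμ).neg).sub ((tendsto_sigmoid_div_atTop hμ).const_mul a))
    refine (((hasDerivAt_tailMoment hμ.ne' x).neg).sub
      ((hasDerivAt_sigmoid_div μ x).const_mul a)).congr_deriv ?_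
    ring
  refine (hshift.add (hpdf.const_mul a)).congr_fun (fun x _ => ?_) measurableSet_Ioi
  simp only [Pi.add_apply]
  ring

lemma integral_Ioi_mul_pdf {μ : ℝ} (hμ : 0 < μ) (a : ℝ) :
    ∫ x in Ioi a, x * pdf μ x = tailMoment μ a := by
  have := integral_Ioi_of_hasDerivAt_of_tendsto' (fun x _ => hasDerivAt_tailMoment hμ.ne' x)
    (integrableOn_Ioi_mul_pdf hμ a).neg (tendsto_tailMoment_atTop hμ)
  rw [integral_neg] at this
  linarith

lemma add_tailMoment_neg_div_sigmoid (μ v : ℝ) :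
    v + tailMoment μ (-v) / sigmoid (v / μ) =
      μ * ((1 + exp (v / μ)) / exp (v / μ)) * log (1 + exp (v / μ)) := by
  have hlog : log (sigmoid (-(v / μ))) = -log (1 + exp (v / μ)) := by
    rw [sigmoid_def, neg_neg, log_inv]
  rw [tailMoment, neg_div, sigmoid_neg, sub_sub_cancel, ← sigmoid_neg, hlog,
    sigmoid_eq_exp_div]
  field_simp
  ring

end Logistic

/-- the expected incentive Δv + E[ξ | ξ > −Δv], for ξ logistic with
scale μ, equals μ·((1+e^{Δv/μ})/e^{Δv/μ})·ln(1+e^{Δv/μ}) and is nonnegative. -/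
theorem stmt14 (μ Δv : ℝ) (hμ : 0 < μ) :
    Δv + (∫ x in Set.Ioi (-Δv), x * (Real.exp (x/μ) / (μ * (1 + Real.exp (x/μ))^2)))
        / (1 - Real.exp (-Δv/μ) / (1 + Real.exp (-Δv/μ)))
      = μ * ((1 + Real.exp (Δv/μ)) / Real.exp (Δv/μ)) * Real.log (1 + Real.exp (Δv/μ)) ∧
    0 ≤ μ * ((1 + Real.exp (Δv/μ)) / Real.exp (Δv/μ)) * Real.log (1 + Real.exp (Δv/μ)) := by
  have hsurvival : 1 - exp (-Δv / μ) / (1 + exp (-Δv / μ)) = sigmoid (Δv / μ) := by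
    rw [← sigmoid_eq_exp_div, neg_div, sigmoid_neg, sub_sub_cancel]
  refine ⟨?_, ?_⟩
  · change Δv + (∫ x in Ioi (-Δv), x * Logistic.pdf μ x) / _ = _
    rw [Logistic.integral_Ioi_mul_pdf hμ, hsurvival, Logistic.add_tailMoment_neg_div_sigmoid]
  · have hlog : 0 ≤ log (1 + exp (Δv / μ)) := log_nonneg (by linarith [exp_pos (Δv / μ)])
    positivity
end
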